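/- arXiv:2307.04884 — 3 statements merged into one kernel-verified Lean document; each statement's English description precedes it below -/
import Mathlib

section
/- (q-Chaundy product representation.) Let q ∈ ℂ with 0 < |q| < 1, let r, s ∈ ℤ with r, s ≥ −1, let u, v ∈ ℕ₀, and let p, ℓ ∈ ℤ with p ≥ r − u and ℓ ≥ s − v. Let a_1, …, a_{r+1}, c_1, …, c_{s+1} ∈ ℂ* with each a_i ∉ Ω_q, and let b_1, …, b_u, d_1, …, d_v ∈ ℂ* with no b_j or d_j in Ω_q. Let X, Y ∈ ℂ*, and assume |X| < 1 if u − r + p = 0 and |Y| < 1 if v − s + ℓ = 0 (if u − r + p > 0, resp. v − s + ℓ > 0, the corresponding series is entire and no restriction is needed). Set A_n := ((a_1,…,a_{r+1};q)_n / ((q;q)_n (b_1,…,b_u;q)_n)) ((−1)^n q^{n(n−1)/2})^{u−r+p} and C_n := ((c_1,…,c_{s+1};q)_n / ((q;q)_n (d_1,…,d_v;q)_n)) ((−1)^n q^{n(n−1)/2})^{v−s+ℓ}. Then (∑_{n=0}^∞ A_n X^n) · (∑_{n=0}^∞ C_n Y^n) = ∑_{n=0}^∞ A_n X^n ∑_{k=0}^{n}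 [ (q^{−n};q)_k (c_1,…,c_{s+1};q)_k (q^{1−n}/b_1,…,q^{1−n}/b_u;q)_k / ( (q;q)_k (d_1,…,d_v;q)_k (q^{1−n}/a_1,…,q^{1−n}/a_{r+1};q)_k ) ] ((−1)^k q^{k(k−1)/2})^{p+ℓ+v−s} Z_n^k, where Z_n := q^{1+p(1−n)} b_1⋯b_u Y / (a_1⋯a_{r+1} X). -/
open Finset

/-- The finite q-Pochhammer symbol `(a;q)_n = ∏_{j=0}^{n-1} (1 - a q^j)`. -/
noncomputable def qPoch (a q : ℂ) (n : ℕ) : ℂ := ∏ j ∈ Finset.range n, (1 - a * q ^ j)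

/-- The infinite q-Pochhammer symbol `(a;q)_∞ = ∏_{j=0}^{∞} (1 - a q^j)`. -/
noncomputable def qPochInf (a q : ℂ) : ℂ := ∏' j : ℕ, (1 - a * q ^ j)

/-- `Ω_q = {q^{-k} : k ∈ ℕ}`. -/
def Omega (q : ℂ) : Set ℂ := {w : ℂ | ∃ k : ℕ, w = q⁻¹ ^ k}

noncomputable def gg (q : ℂ) (k : ℕ) : ℂ := (-1)^k * q^(k*(k-1)/2)

lemma qPoch_succ (x q : ℂ) (n : ℕ) : qPoch x q (n+1) = qPoch x q n * (1 - x * q^n) :=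
  Finset.prod_range_succ _ _

lemma gg_succ (q : ℂ) (k : ℕ) : gg q (k+1) = gg q k * (-(q^k)) := by
  unfold gg
  have h : (k+1)*k/2 = k*(k-1)/2 + k := by
    have h1 := Nat.choose_two_right k
    have h2 := Nat.choose_two_right (k+1)
    have h3 : (k+1).choose 2 = k.choose 1 + k.choose 2 := Nat.choose_succ_succ _ _
    simp only [Nat.add_sub_cancel] at h2
    simp [Nat.choose_one_right] at h3
    omega
  rw [show (k+1)*((k+1)-1)/2 = (k+1)*k/2 by norm_num, h]
  ring

lemma gg_ne_zero {q : ℂ} (hq : q ≠ 0) (k : ℕ) : gg q k ≠ 0 := by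
  unfold gg
  exact mul_ne_zero (pow_ne_zero _ (by norm_num)) (pow_ne_zero _ hq)

lemma qPoch_ne_zero {q x : ℂ} (hq : q ≠ 0) (hx : x ∉ Omega q) (n : ℕ) : qPoch x q n ≠ 0 := by
  unfold qPoch
  refine Finset.prod_ne_zero_iff.mpr fun j _ => ?_
  intro h
  apply hx
  have hxq : x * q ^ j = 1 := by linear_combination -h
  exact ⟨j, by rw [inv_pow]; exact eq_inv_of_mul_eq_one_left hxq⟩

lemma qPoch_q_ne_zero {q : ℂ} (hq1 : ‖q‖ < 1) (n : ℕ) : qPoch q q n ≠ 0 := by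
  unfold qPoch
  refine Finset.prod_ne_zero_iff.mpr fun j _ => ?_
  intro h
  have : q * q ^ j = 1 := by linear_combination -h
  have h2 : ‖q * q^j‖ < 1 := by
    rw [norm_mul, norm_pow]
    calc ‖q‖ * ‖q‖ ^ j ≤ ‖q‖ * 1 := by
          refine mul_le_mul_of_nonneg_left (pow_le_one₀ (norm_nonneg q) hq1.le) (norm_nonneg q)
      _ < 1 := by rwa [mul_one]
  rw [this] at h2; simp at h2

lemma shifted_ne_zero {q x : ℂ} (hq : q ≠ 0) (hx : x ≠ 0) (hxo : x ∉ Omega q)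
    {n k : ℕ} (hk : k ≤ n) : qPoch (q^((1:ℤ)-n)/x) q k ≠ 0 := by
  unfold qPoch
  refine Finset.prod_ne_zero_iff.mpr fun j hj => ?_
  intro h
  apply hxo
  have hj' : j < k := Finset.mem_range.mp hj
  have hx1 : x = q^((1:ℤ)-n) * q^j := by
    have h2 : (q^((1:ℤ)-n)/x) * q^j = 1 := by linear_combination -h
    field_simp at h2
    linear_combination -h2
  refine ⟨n-1-j, ?_⟩
  rw [hx1, inv_pow, ← zpow_natCast q j, ← zpow_add₀ hq, ← zpow_natCast q (n-1-j), ← zpow_neg]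
  congr 1
  have : (↑(n-1-j) : ℤ) = (n:ℤ) - 1 - j := by omega
  omega

lemma qinvn_ne_zero {q : ℂ} (hq0 : 0 < ‖q‖) (hq1 : ‖q‖ < 1)
    {n k : ℕ} (hk : k ≤ n) : qPoch ((q⁻¹)^n) q k ≠ 0 := by
  unfold qPoch
  refine Finset.prod_ne_zero_iff.mpr fun j hj => ?_
  intro h
  have hj' : j < k := Finset.mem_range.mp hj
  have hq : q ≠ 0 := by simpa using hq0.ne'
  have h2 : (q:ℂ)⁻¹^n * q^j = 1 := by linear_combination -h
  have h3 : (q:ℂ)^j = q^n := by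
    calc (q:ℂ)^j = (q⁻¹^n * q^j) * q^n := by
          rw [inv_pow, mul_comm ((q^n)⁻¹), mul_assoc, inv_mul_cancel₀ (pow_ne_zero _ hq), mul_one]
      _ = q^n := by rw [h2, one_mul]
  have h4 : ‖q‖ ^ j = ‖q‖ ^ n := by
    rw [← norm_pow, ← norm_pow, h3]
  have := pow_lt_pow_right_of_lt_one₀ hq0 hq1 (show j < n by omega)
  rw [h4] at this
  exact lt_irrefl _ this

lemma qPoch_zero (x q : ℂ) : qPoch x q 0 = 1 := rfl

lemma key (q x : ℂ) (hq : q ≠ 0) (hx : x ≠ 0) (n : ℕ) :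
    ∀ k, k ≤ n → qPoch x q n * gg q k =
      qPoch x q (n-k) * qPoch (q^((1:ℤ)-n)/x) q k * x^k * q^((k:ℤ)*((n:ℤ)-1)) := by
  intro k
  induction k with
  | zero => simp [gg, qPoch_zero]
  | succ k ih =>
    intro hk
    have hk' : k ≤ n := by omega
    rw [gg_succ, ← mul_assoc, ih hk']
    rw [qPoch_succ (q^((1:ℤ)-n)/x) q k]
    have hsplit : qPoch x q (n-k) = qPoch x q (n-(k+1)) * (1 - x * q^(n-k-1)) := by
      have : n - k = (n - (k+1)) + 1 := by omega
      rw [this, qPoch_succ]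
      congr 2
    rw [hsplit]
    have hcross : (1 - x * q^(n-k-1)) * (-(q^k)) =
        (1 - (q^((1:ℤ)-n)/x) * q^k) * x * q^((n:ℤ)-1) := by
      have e1 : (q:ℂ)^(n-k-1) * q^k = q^((n:ℤ)-1) := by
        rw [← zpow_natCast q (n-k-1), ← zpow_natCast q k, ← zpow_add₀ hq]
        congr 1; omega
      have e2 : (q:ℂ)^((1:ℤ)-n) * q^(k:ℤ) * q^((n:ℤ)-1) = q^(k:ℤ) := by
        rw [← zpow_add₀ hq, ← zpow_add₀ hq]
        congr 1; ring
      have e2' : (q:ℂ)^((1:ℤ)-n) * q^k * q^((n:ℤ)-1) = q^k := by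
        rw [← zpow_natCast q k]; exact e2
      field_simp
      linear_combination x * e1 + e2'
    have e3 : (q:ℂ)^((((k+1):ℕ):ℤ) * ((n:ℤ)-1)) = q^((k:ℤ)*((n:ℤ)-1)) * q^((n:ℤ)-1) := by
      rw [← zpow_add₀ hq]
      congr 1; push_cast; ring
    rw [e3]
    linear_combination (qPoch x q (n-(k+1)) * qPoch (q^((1:ℤ)-n)/x) q k * x^k * q^((k:ℤ)*((n:ℤ)-1))) * hcross

lemma gg_sub (q : ℂ) (hq : q ≠ 0) (n : ℕ) :
    ∀ k, k ≤ n → gg q (n-k) = gg q n * gg q k * q^((k:ℤ)*(1-(n:ℤ))) := by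
  intro k
  induction k with
  | zero => simp [gg]
  | succ k ih =>
    intro hk
    have hk' : k ≤ n := by omega
    apply mul_right_cancel₀ (show (-(q^(n-k-1))) ≠ 0 by simpa using pow_ne_zero _ hq)
    have h1 : gg q (n-(k+1)) * (-(q^(n-k-1))) = gg q (n-k) := by
      have h2 : n - k = (n-(k+1)) + 1 := by omega
      rw [h2, gg_succ]
      congr 2
    rw [h1, ih hk', gg_succ]
    have e : (q:ℂ)^(k:ℕ) * q^((((k+1):ℕ):ℤ)*(1-(n:ℤ))) * q^((n-k-1:ℕ)) = q^((k:ℤ)*(1-(n:ℤ))) := by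
      rw [← zpow_natCast q k, ← zpow_natCast q (n-k-1), ← zpow_add₀ hq, ← zpow_add₀ hq]
      congr 1
      have hc : ((n-k-1:ℕ):ℤ) = (n:ℤ) - k - 1 := by omega
      rw [hc]; push_cast; ring
    linear_combination (-(gg q n * gg q k)) * e

lemma gg_def (q : ℂ) (n : ℕ) : gg q n = (-1)^n * q^(n*(n-1)/2) := rfl

lemma key_prod (q : ℂ) (hq : q ≠ 0) {m : ℕ} (f : Fin m → ℂ) (hf : ∀ i, f i ≠ 0)
    (n k : ℕ) (hk : k ≤ n) :
    (∏ i, qPoch (f i) q n) * (gg q k)^m =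
      (∏ i, qPoch (f i) q (n-k)) * (∏ i, qPoch (q^((1:ℤ)-n)/(f i)) q k) *
        (∏ i, f i)^k * (q^((k:ℤ)*((n:ℤ)-1)))^m := by
  have h1 : (∏ i, qPoch (f i) q n) * (gg q k)^m = ∏ i : Fin m, (qPoch (f i) q n * gg q k) := by
    rw [Finset.prod_mul_distrib, Finset.prod_const, Finset.card_univ, Fintype.card_fin]
  rw [h1]
  have h2 : ∀ i : Fin m, qPoch (f i) q n * gg q k =
      qPoch (f i) q (n-k) * qPoch (q^((1:ℤ)-n)/(f i)) q k * (f i)^k * q^((k:ℤ)*((n:ℤ)-1)) :=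
    fun i => key q (f i) hq (hf i) n k hk
  rw [Finset.prod_congr rfl (fun i _ => h2 i)]
  rw [Finset.prod_mul_distrib, Finset.prod_mul_distrib, Finset.prod_mul_distrib,
    Finset.prod_const, Finset.card_univ, Fintype.card_fin, ← Finset.prod_pow]

lemma RA (q : ℂ) (hq0 : 0 < ‖q‖) (hq1 : ‖q‖ < 1)
    (R u : ℕ) (p : ℤ)
    (a : Fin R → ℂ) (b : Fin u → ℂ)
    (ha0 : ∀ i, a i ≠ 0) (hb0 : ∀ j, b j ≠ 0)
    (haΩ : ∀ i, a i ∉ Omega q) (hbΩ : ∀ j, b j ∉ Omega q)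
    (A : ℕ → ℂ)
    (hA : ∀ n, A n = (∏ i, qPoch (a i) q n) / (qPoch q q n * ∏ j, qPoch (b j) q n) *
      ((-1) ^ n * q ^ (n * (n - 1) / 2)) ^ ((u : ℤ) - ((R : ℤ) - 1) + p))
    (n k : ℕ) (hk : k ≤ n) :
    A (n-k) * (∏ i, qPoch (q^((1:ℤ)-n)/a i) q k) * (∏ i, a i)^k =
      A n * (gg q k)^p * q^((k:ℤ)*(1 + p*(1-(n:ℤ)))) * (∏ j, b j)^k *
        qPoch ((q⁻¹)^n) q k * (∏ j, qPoch (q^((1:ℤ)-n)/b j) q k) := by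
  have hq : q ≠ 0 := by simpa using hq0.ne'
  rw [hA (n-k), hA n]
  simp only [← gg_def]
  set E1 : ℤ := (u : ℤ) - ((R : ℤ) - 1) + p with hE1
  -- abbreviations
  set Am := ∏ i, qPoch (a i) q (n-k) with hAm
  set Bm := ∏ j, qPoch (b j) q (n-k) with hBm
  set Qm := qPoch q q (n-k) with hQm
  set An := ∏ i, qPoch (a i) q n with hAn
  set Bn := ∏ j, qPoch (b j) q n with hBn
  set Qn := qPoch q q n with hQn
  set Wa := ∏ i, qPoch (q^((1:ℤ)-n)/a i) q k with hWa
  set Wb := ∏ j, qPoch (q^((1:ℤ)-n)/b j) q k with hWb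
  set Wq := qPoch ((q⁻¹)^n) q k with hWq
  set g := gg q k with hg
  set gn := gg q n with hgn
  set qq := q^((k:ℤ)*((n:ℤ)-1)) with hqq
  set qz := q^((k:ℤ)*(1-(n:ℤ))) with hqz
  set qpow := q^((k:ℤ)*(1 + p*(1-(n:ℤ)))) with hqpow
  set Pa := ∏ i, a i with hPa
  set Pb := ∏ j, b j with hPb
  -- nonvanishing
  have hgne : g ≠ 0 := gg_ne_zero hq k
  have hgnne : gn ≠ 0 := gg_ne_zero hq n
  have hqqne : qq ≠ 0 := zpow_ne_zero _ hq
  have hQmne : Qm ≠ 0 := qPoch_q_ne_zero hq1 _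
  have hQnne : Qn ≠ 0 := qPoch_q_ne_zero hq1 _
  have hBmne : Bm ≠ 0 := Finset.prod_ne_zero_iff.mpr fun j _ => qPoch_ne_zero hq (hbΩ j) _
  have hBnne : Bn ≠ 0 := Finset.prod_ne_zero_iff.mpr fun j _ => qPoch_ne_zero hq (hbΩ j) _
  -- the three product identities
  have F1 : An * g^R = Am * Wa * Pa^k * qq^R := key_prod q hq a ha0 n k hk
  have F2 : Bn * g^u = Bm * Wb * Pb^k * qq^u := key_prod q hq b hb0 n k hk
  have F3 : Qn * g = Qm * Wq * q^k * qq := by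
    have h := key q q hq hq n k hk
    have hbase : q^((1:ℤ)-n)/q = (q⁻¹)^n := by
      rw [inv_pow, ← zpow_natCast q n, ← zpow_neg, div_eq_mul_inv, ← zpow_neg_one,
        ← zpow_add₀ hq]
      congr 1; ring
    rw [hbase] at h
    simpa [hQn, hQm, hWq, hg, hqq] using h
  -- gm expansion
  have F4 : gg q (n-k) = gn * g * qz := gg_sub q hq n k hk
  have hgm : (gg q (n-k))^E1 = gn^E1 * g^E1 * qz^E1 := by
    rw [F4, mul_zpow, mul_zpow]
  -- exponent bookkeeping
  have EXPg : g^(R:ℕ) * g^E1 = g^p * g^((u+1:ℕ)) := by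
    rw [← zpow_natCast g R, ← zpow_natCast g (u+1), ← zpow_add₀ hgne, ← zpow_add₀ hgne]
    congr 1; push_cast [hE1]; ring
  have EXPq : q^(k:ℕ) * qq^((u+1:ℕ)) * qz^E1 = qpow * qq^(R:ℕ) := by
    rw [hqq, hqz, hqpow, ← zpow_natCast q k, ← zpow_natCast (q ^ ((k:ℤ) * ((n:ℤ) - 1))) (u+1),
      ← zpow_natCast (q ^ ((k:ℤ) * ((n:ℤ) - 1))) R, ← zpow_mul, ← zpow_mul, ← zpow_mul,
      ← zpow_add₀ hq, ← zpow_add₀ hq, ← zpow_add₀ hq]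
    congr 1; push_cast [hE1]; ring
  have EXP : g^(R:ℕ) * q^(k:ℕ) * qq^((u+1:ℕ)) * g^E1 * qz^E1 =
      g^p * qpow * g^((u+1:ℕ)) * qq^(R:ℕ) := by
    linear_combination (q^(k:ℕ) * qq^((u+1:ℕ)) * qz^E1) * EXPg +
      (g^p * g^((u+1:ℕ))) * EXPq
  -- combined product identity
  have F123 : (An * g^R) * ((Qm * Wq * q^k * qq) * (Bm * Wb * Pb^k * qq^u)) =
      (Am * Wa * Pa^k * qq^R) * ((Qn * g) * (Bn * g^u)) := by
    linear_combination ((Qm * Wq * q^k * qq) * (Bm * Wb * Pb^k * qq^u)) * F1 -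
      ((Am * Wa * Pa^k * qq^R) * (Bm * Wb * Pb^k * qq^u)) * F3 -
      ((Am * Wa * Pa^k * qq^R) * (Qn * g)) * F2
  -- now the main computation
  rw [hgm]
  refine mul_right_cancel₀ (show g^((u+1:ℕ)) * qq^(R:ℕ) ≠ 0 from
    mul_ne_zero (pow_ne_zero _ hgne) (pow_ne_zero _ hqqne)) ?_
  field_simp
  refine mul_right_cancel₀ (mul_ne_zero (pow_ne_zero (u+1) hgne) (pow_ne_zero R hqqne)) ?_
  linear_combination (-(g^E1 * qz^E1)) * F123 +
    (An * Qm * Bm * Wq * Wb * Pb^k) * EXP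

lemma term_eq (q : ℂ) (hq0 : 0 < ‖q‖) (hq1 : ‖q‖ < 1)
    (R S u v : ℕ) (p l : ℤ)
    (a : Fin R → ℂ) (c : Fin S → ℂ) (b : Fin u → ℂ) (d : Fin v → ℂ)
    (ha0 : ∀ i, a i ≠ 0) (hc0 : ∀ i, c i ≠ 0) (hb0 : ∀ j, b j ≠ 0) (hd0 : ∀ j, d j ≠ 0)
    (haΩ : ∀ i, a i ∉ Omega q) (hbΩ : ∀ j, b j ∉ Omega q)
    (hcΩ : ∀ i, c i ∉ Omega q) (hdΩ : ∀ j, d j ∉ Omega q)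
    (X Y : ℂ) (hX0 : X ≠ 0) (hY0 : Y ≠ 0)
    (A C : ℕ → ℂ)
    (hA : ∀ n, A n = (∏ i, qPoch (a i) q n) / (qPoch q q n * ∏ j, qPoch (b j) q n) *
      ((-1) ^ n * q ^ (n * (n - 1) / 2)) ^ ((u : ℤ) - ((R : ℤ) - 1) + p))
    (hC : ∀ n, C n = (∏ i, qPoch (c i) q n) / (qPoch q q n * ∏ j, qPoch (d j) q n) *
      ((-1) ^ n * q ^ (n * (n - 1) / 2)) ^ ((v : ℤ) - ((S : ℤ) - 1) + l))
    (Z : ℕ → ℂ)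
    (hZ : ∀ n : ℕ, Z n = q ^ (1 + p * (1 - (n : ℤ))) * (∏ j, b j) * Y / ((∏ i, a i) * X))
    (n k : ℕ) (hk : k ≤ n) :
    A n * X ^ n *
        ((qPoch (q⁻¹ ^ n) q k * (∏ i, qPoch (c i) q k) *
              ∏ j, qPoch (q ^ ((1 : ℤ) - n) / b j) q k) /
            (qPoch q q k * (∏ j, qPoch (d j) q k) *
              ∏ i, qPoch (q ^ ((1 : ℤ) - n) / a i) q k) *
            ((-1) ^ k * q ^ (k * (k - 1) / 2)) ^ (p + l + (v : ℤ) - ((S : ℤ) - 1)) *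
            Z n ^ k) =
      A (n-k) * X ^ (n-k) * (C k * Y ^ k) := by
  have hq : q ≠ 0 := by simpa using hq0.ne'
  have hRA := RA q hq0 hq1 R u p a b ha0 hb0 haΩ hbΩ A hA n k hk
  rw [hC k, hZ n]
  simp only [← gg_def]
  have hgne : gg q k ≠ 0 := gg_ne_zero hq k
  have hsplit : (gg q k)^(p + l + (v:ℤ) - ((S:ℤ)-1)) =
      (gg q k)^p * (gg q k)^((v:ℤ) - ((S:ℤ)-1) + l) := by
    rw [← zpow_add₀ hgne]; congr 1; ring
  have hZk : (q ^ (1 + p * (1 - (n : ℤ))) * (∏ j, b j) * Y / ((∏ i, a i) * X))^k =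
      q^((k:ℤ)*(1 + p*(1-(n:ℤ)))) * (∏ j, b j)^k * Y^k / ((∏ i, a i)^k * X^k) := by
    rw [div_pow, mul_pow, mul_pow, mul_pow, ← zpow_natCast (q ^ (1 + p * (1 - (n : ℤ)))) k,
      ← zpow_mul]
    congr 2
    ring
  have hXpow : X^n = X^(n-k) * X^k := by rw [← pow_add]; congr 1; omega
  rw [hsplit, hZk]
  have hQk : qPoch q q k ≠ 0 := qPoch_q_ne_zero hq1 k
  have hPd : (∏ j, qPoch (d j) q k) ≠ 0 :=
    Finset.prod_ne_zero_iff.mpr fun j _ => qPoch_ne_zero hq (hdΩ j) _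
  have hWa : (∏ i, qPoch (q ^ ((1 : ℤ) - n) / a i) q k) ≠ 0 :=
    Finset.prod_ne_zero_iff.mpr fun i _ => shifted_ne_zero hq (ha0 i) (haΩ i) hk
  have hPa : (∏ i, a i) ≠ 0 := Finset.prod_ne_zero_iff.mpr fun i _ => ha0 i
  field_simp
  simp only [one_div, ← inv_pow]
  linear_combination (A n * qPoch ((q⁻¹)^n) q k * (∏ i, qPoch (c i) q k) *
      (∏ j, qPoch (q ^ ((1 : ℤ) - n) / b j) q k) * (gg q k)^p *
      q^((k:ℤ)*(1 + p*(1-(n:ℤ)))) * (∏ j, b j)^k) * hXpow -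
    ((∏ i, qPoch (c i) q k) * X^k * X^(n-k)) * hRA

lemma one_sub_ne_zero_of_abs_lt {w : ℂ} (h : ‖w‖ < 1) : (1:ℂ) - w ≠ 0 := by
  intro h0
  have : w = 1 := by linear_combination -h0
  rw [this] at h; simp at h

lemma summableA (q : ℂ) (hq0 : 0 < ‖q‖) (hq1 : ‖q‖ < 1)
    (R u : ℕ) (p : ℤ) (hp : (R : ℤ) - 1 - u ≤ p)
    (a : Fin R → ℂ) (b : Fin u → ℂ)
    (ha0 : ∀ i, a i ≠ 0) (hb0 : ∀ j, b j ≠ 0)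
    (haΩ : ∀ i, a i ∉ Omega q) (hbΩ : ∀ j, b j ∉ Omega q)
    (X : ℂ) (hX0 : X ≠ 0)
    (hX : (u : ℤ) - ((R : ℤ) - 1) + p = 0 → ‖X‖ < 1)
    (A : ℕ → ℂ)
    (hA : ∀ n, A n = (∏ i, qPoch (a i) q n) / (qPoch q q n * ∏ j, qPoch (b j) q n) *
      ((-1) ^ n * q ^ (n * (n - 1) / 2)) ^ ((u : ℤ) - ((R : ℤ) - 1) + p)) :
    Summable (fun n => ‖A n * X^n‖) := by
  have hq : q ≠ 0 := by simpa using hq0.ne'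
  set E1 : ℤ := (u : ℤ) - ((R : ℤ) - 1) + p with hE1
  have hE1nn : 0 ≤ E1 := by omega
  set e1 : ℕ := E1.toNat with he1
  have hcast : (e1 : ℤ) = E1 := Int.toNat_of_nonneg hE1nn
  set ρ : ℕ → ℂ := fun n =>
    (∏ i, (1 - a i * q^n)) / ((1 - q*q^n) * ∏ j, (1 - b j * q^n)) * (-(q^n))^e1 * X with hρdef
  have hqq : ∀ n : ℕ, (1 : ℂ) - q * q^n ≠ 0 := fun n =>
    one_sub_ne_zero_of_abs_lt (by
      rw [norm_mul, norm_pow]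
      calc ‖q‖ * ‖q‖ ^ n ≤ ‖q‖ * 1 :=
            mul_le_mul_of_nonneg_left (pow_le_one₀ (norm_nonneg q) hq1.le)
              (norm_nonneg q)
        _ < 1 := by rwa [mul_one])
  have hbq : ∀ (j : Fin u) (n : ℕ), (1 : ℂ) - b j * q^n ≠ 0 := by
    intro j n h0
    apply hbΩ j
    have : b j * q^n = 1 := by linear_combination -h0
    exact ⟨n, by rw [inv_pow]; exact eq_inv_of_mul_eq_one_left this⟩
  have hstep : ∀ n, A (n+1) * X^(n+1) = (A n * X^n) * ρ n := by
    intro n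
    rw [hA (n+1), hA n]
    simp only [← gg_def]
    have hg1 : gg q (n+1) ^ E1 = gg q n ^ E1 * (-(q^n))^e1 := by
      rw [gg_succ, mul_zpow]
      congr 1
      rw [← hcast, zpow_natCast]
    rw [hg1]
    have hpa : (∏ i, qPoch (a i) q (n+1)) = (∏ i, qPoch (a i) q n) * ∏ i, (1 - a i * q^n) := by
      rw [← Finset.prod_mul_distrib]
      exact Finset.prod_congr rfl fun i _ => qPoch_succ _ _ _
    have hpb : (∏ j, qPoch (b j) q (n+1)) = (∏ j, qPoch (b j) q n) * ∏ j, (1 - b j * q^n) := by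
      rw [← Finset.prod_mul_distrib]
      exact Finset.prod_congr rfl fun j _ => qPoch_succ _ _ _
    rw [hpa, hpb, qPoch_succ q q n, hρdef]
    have h1 : qPoch q q n ≠ 0 := qPoch_q_ne_zero hq1 n
    have h2 : (∏ j, qPoch (b j) q n) ≠ 0 :=
      Finset.prod_ne_zero_iff.mpr fun j _ => qPoch_ne_zero hq (hbΩ j) _
    have h3 : (∏ j, (1 - b j * q^n)) ≠ 0 := Finset.prod_ne_zero_iff.mpr fun j _ => hbq j n
    field_simp
    simp only [mul_comm (a _) (q ^ n)]
    ring
  have hne : ∀ n, A n * X^n ≠ 0 := by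
    intro n
    rw [hA n]
    simp only [← gg_def]
    exact mul_ne_zero (mul_ne_zero
      (div_ne_zero (Finset.prod_ne_zero_iff.mpr fun i _ => qPoch_ne_zero hq (haΩ i) _)
        (mul_ne_zero (qPoch_q_ne_zero hq1 n)
          (Finset.prod_ne_zero_iff.mpr fun j _ => qPoch_ne_zero hq (hbΩ j) _)))
      (zpow_ne_zero _ (gg_ne_zero hq n))) (pow_ne_zero _ hX0)
  -- limit of the ratio
  have hqn : Filter.Tendsto (fun n : ℕ => (q:ℂ)^n) Filter.atTop (nhds 0) :=
    tendsto_pow_atTop_nhds_zero_of_norm_lt_one (by exact hq1)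
  have honef : ∀ w : ℂ, Filter.Tendsto (fun n : ℕ => 1 - w * q^n) Filter.atTop (nhds 1) := by
    intro w
    have : Filter.Tendsto (fun n : ℕ => 1 - w * q^n) Filter.atTop (nhds (1 - w * 0)) :=
      Filter.Tendsto.sub tendsto_const_nhds (Filter.Tendsto.const_mul w hqn)
    simpa using this
  have hnum : Filter.Tendsto (fun n : ℕ => ∏ i, (1 - a i * q^n)) Filter.atTop (nhds 1) := by
    have := tendsto_finset_prod (f := fun (i : Fin R) (n : ℕ) => 1 - a i * q^n)
      (a := fun _ => (1:ℂ)) (x := Filter.atTop) Finset.univ (fun i _ => honef (a i))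
    simpa using this
  have hden : Filter.Tendsto (fun n : ℕ => (1 - q*q^n) * ∏ j, (1 - b j * q^n))
      Filter.atTop (nhds 1) := by
    have h2 := tendsto_finset_prod (f := fun (j : Fin u) (n : ℕ) => 1 - b j * q^n)
      (a := fun _ => (1:ℂ)) (x := Filter.atTop) Finset.univ (fun j _ => honef (b j))
    have := Filter.Tendsto.mul (honef q) h2
    simpa using this
  -- limit w of ρ
  obtain ⟨w, hw, hρ⟩ : ∃ w : ℂ, ‖w‖ < 1 ∧
      Filter.Tendsto ρ Filter.atTop (nhds w) := by
    rcases Nat.eq_zero_or_pos e1 with he | he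
    · refine ⟨X, hX (by omega), ?_⟩
      have : Filter.Tendsto ρ Filter.atTop (nhds ((1/1) * 1 * X)) := by
        refine Filter.Tendsto.mul (Filter.Tendsto.mul (Filter.Tendsto.div hnum hden one_ne_zero) ?_) tendsto_const_nhds
        simp [he]
      simpa using this
    · refine ⟨0, by norm_num, ?_⟩
      have hpow : Filter.Tendsto (fun n : ℕ => (-(q^n))^e1) Filter.atTop (nhds 0) := by
        have := Filter.Tendsto.pow (Filter.Tendsto.neg hqn) e1
        simpa [zero_pow (by omega : e1 ≠ 0)] using this
      have : Filter.Tendsto ρ Filter.atTop (nhds ((1/1) * 0 * X)) :=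
        Filter.Tendsto.mul (Filter.Tendsto.mul (Filter.Tendsto.div hnum hden one_ne_zero) hpow) tendsto_const_nhds
      simpa using this
  -- ratio test
  refine summable_of_ratio_test_tendsto_lt_one (l := ‖w‖)
    (by exact hw) ?_ ?_
  · exact Filter.Eventually.of_forall fun n => by
      simp only [ne_eq, norm_eq_zero]
      exact hne n
  · have hratio : ∀ n : ℕ, ‖‖A (n+1) * X^(n+1)‖‖ / ‖‖A n * X^n‖‖ = ‖ρ n‖ := by
      intro n
      rw [Real.norm_of_nonneg (norm_nonneg _), Real.norm_of_nonneg (norm_nonneg _),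
        hstep n, norm_mul]
      rw [mul_comm, mul_div_assoc, div_self (by simpa using hne n), mul_one]
    refine Filter.Tendsto.congr (fun n => (hratio n).symm) ?_
    exact Filter.Tendsto.norm hρ

/-- q-Chaundy product representation (Theorem 4.1 / eq. (qCh1)).
Here `R = r+1` and `S = s+1` where `r,s ≥ -1` are the integers of the paper. -/
theorem q_Chaundy_product_representation
    (q : ℂ) (hq0 : 0 < ‖q‖) (hq1 : ‖q‖ < 1)
    (R S u v : ℕ) (p l : ℤ)
    (hp : (R : ℤ) - 1 - u ≤ p) (hl : (S : ℤ) - 1 - v ≤ l)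
    (a : Fin R → ℂ) (c : Fin S → ℂ) (b : Fin u → ℂ) (d : Fin v → ℂ)
    (ha0 : ∀ i, a i ≠ 0) (hc0 : ∀ i, c i ≠ 0) (hb0 : ∀ j, b j ≠ 0) (hd0 : ∀ j, d j ≠ 0)
    (haΩ : ∀ i, a i ∉ Omega q) (hbΩ : ∀ j, b j ∉ Omega q)
    (hcΩ : ∀ i, c i ∉ Omega q) (hdΩ : ∀ j, d j ∉ Omega q)
    (X Y : ℂ) (hX0 : X ≠ 0) (hY0 : Y ≠ 0)
    (hX : (u : ℤ) - ((R : ℤ) - 1) + p = 0 → ‖X‖ < 1)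
    (hY : (v : ℤ) - ((S : ℤ) - 1) + l = 0 → ‖Y‖ < 1)
    (A C : ℕ → ℂ)
    (hA : ∀ n, A n = (∏ i, qPoch (a i) q n) / (qPoch q q n * ∏ j, qPoch (b j) q n) *
      ((-1) ^ n * q ^ (n * (n - 1) / 2)) ^ ((u : ℤ) - ((R : ℤ) - 1) + p))
    (hC : ∀ n, C n = (∏ i, qPoch (c i) q n) / (qPoch q q n * ∏ j, qPoch (d j) q n) *
      ((-1) ^ n * q ^ (n * (n - 1) / 2)) ^ ((v : ℤ) - ((S : ℤ) - 1) + l))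
    (Z : ℕ → ℂ)
    (hZ : ∀ n : ℕ, Z n = q ^ (1 + p * (1 - (n : ℤ))) * (∏ j, b j) * Y / ((∏ i, a i) * X)) :
    (∑' n : ℕ, A n * X ^ n) * (∑' n : ℕ, C n * Y ^ n) =
      ∑' n : ℕ, A n * X ^ n *
        ∑ k ∈ Finset.range (n + 1),
          (qPoch (q⁻¹ ^ n) q k * (∏ i, qPoch (c i) q k) *
              ∏ j, qPoch (q ^ ((1 : ℤ) - n) / b j) q k) /
            (qPoch q q k * (∏ j, qPoch (d j) q k) *
              ∏ i, qPoch (q ^ ((1 : ℤ) - n) / a i) q k) *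
            ((-1) ^ k * q ^ (k * (k - 1) / 2)) ^ (p + l + (v : ℤ) - ((S : ℤ) - 1)) *
            Z n ^ k := by
  have hsA : Summable (fun n => ‖A n * X^n‖) :=
    summableA q hq0 hq1 R u p hp a b ha0 hb0 haΩ hbΩ X hX0 hX A hA
  have hsC : Summable (fun n => ‖C n * Y^n‖) :=
    summableA q hq0 hq1 S v l hl c d hc0 hd0 hcΩ hdΩ Y hY0 hY C hC
  rw [tsum_mul_tsum_eq_tsum_sum_range_of_summable_norm hsA hsC]
  refine tsum_congr fun n => ?_
  rw [Finset.mul_sum]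
  rw [← Finset.sum_range_reflect]
  refine Finset.sum_congr rfl fun k hk => ?_
  have hk' : k ≤ n := by
    have := Finset.mem_range.mp hk; omega
  have h1 : n + 1 - 1 - k = n - k := by omega
  rw [h1, Nat.sub_sub_self hk']
  exact (term_eq q hq0 hq1 R S u v p l a c b d ha0 hc0 hb0 hd0 haΩ hbΩ hcΩ hdΩ
    X Y hX0 hY0 A C hA hC Z hZ n k hk').symm
end

section
/- (Product generating function for Askey–Wilson polynomials.) Let q ∈ ℂ with 0 < |q| < 1, let a, b, c, d ∈ ℂ*, z ∈ ℂ*, x = (z + z^{−1})/2, and t ∈ ℂ with |tz| < 1 and |t/z| < 1. Assume ab ∉ Ω_q, cd ∉ Ω_q, and that for every n, k the q-Pochhammer symbols (q^{1−n}z/c;q)_k and (q^{1−n}z/d;q)_k are nonzero. Then ( ∑_{k=0}^∞ [ (az,bz;q)_k / ((q,ab;q)_k) ] (t/z)^k ) · ( ∑_{k=0}^∞ [ (c/z,d/z;q)_k / ((q,cd;q)_k) ] (tz)^k ) = ∑_{n=0}^∞ p_n(x;a,b,c,d|q) t^n / ( (q;q)_n (ab;q)_n (cd;q)_n ). -/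
open Finset

/-- The Askey--Wilson polynomials `p_n(x;a,b,c,d|q)`, in the representation
`z^n (ab, c/z, d/z;q)_n · 4φ3(q^{-n}, az, bz, q^{1-n}/(cd); ab, q^{1-n}z/c, q^{1-n}z/d; q, q)`,
where `x = (z + z⁻¹)/2`. -/
noncomputable def askeyWilson (q a b c d z : ℂ) (n : ℕ) : ℂ :=
  z ^ n * qPoch (a * b) q n * qPoch (c / z) q n * qPoch (d / z) q n *
    ∑ k ∈ Finset.range (n + 1),
      (qPoch (q⁻¹ ^ n) q k * qPoch (a * z) q k * qPoch (b * z) q k *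
          qPoch (q ^ ((1 : ℤ) - n) / (c * d)) q k) /
        (qPoch q q k * qPoch (a * b) q k * qPoch (q ^ ((1 : ℤ) - n) * z / c) q k *
          qPoch (q ^ ((1 : ℤ) - n) * z / d) q k) * q ^ k

/- ### Auxiliary lemmas -/

lemma geom_partial_le {r : ℝ} (h0 : 0 ≤ r) (h1 : r < 1) (k : ℕ) :
    ∑ j ∈ range k, r ^ j ≤ (1 - r)⁻¹ := by
  have := Summable.sum_le_tsum (range k) (fun i _ => pow_nonneg h0 i)
    (summable_geometric_of_lt_one h0 h1)
  simpa [tsum_geometric_of_lt_one h0 h1] using this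

lemma abs_one_sub_ge (w : ℂ) : 1 - ‖w‖ ≤ ‖1 - w‖ := by
  have := norm_add_le (1 - w) w
  simp at this
  linarith

lemma qPoch_abs_le {q : ℂ} (hq1 : ‖q‖ < 1) (α : ℂ) (k : ℕ) :
    ‖qPoch α q k‖ ≤ Real.exp (‖α‖ * (1 - ‖q‖)⁻¹) := by
  rw [qPoch, norm_prod]
  calc ∏ j ∈ range k, ‖1 - α * q ^ j‖
      ≤ ∏ j ∈ range k, Real.exp (‖α‖ * ‖q‖ ^ j) := by
        refine Finset.prod_le_prod (fun j _ => norm_nonneg _) (fun j _ => ?_)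
        calc ‖1 - α * q ^ j‖ ≤ ‖(1:ℂ)‖ + ‖α * q ^ j‖ := by
              exact norm_sub_le 1 (α * q ^ j)
          _ = 1 + ‖α‖ * ‖q‖ ^ j := by simp [norm_mul, norm_pow]
          _ ≤ Real.exp (‖α‖ * ‖q‖ ^ j) := by
              have := Real.add_one_le_exp (‖α‖ * ‖q‖ ^ j)
              linarith
    _ = Real.exp (∑ j ∈ range k, ‖α‖ * ‖q‖ ^ j) := by
        rw [Real.exp_sum]
    _ ≤ _ := by
        rw [Real.exp_le_exp, ← mul_sum]
        have := geom_partial_le (norm_nonneg q) hq1 k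
        have h0 := norm_nonneg α
        nlinarith

lemma qPoch_abs_lower {q α : ℂ} (hq1 : ‖q‖ < 1)
    (h : ∀ j : ℕ, (1 : ℂ) - α * q ^ j ≠ 0) :
    ∃ δ > 0, ∀ k, δ ≤ ‖qPoch α q k‖ := by
  set r := ‖q‖ with hr
  have h0 : 0 ≤ r := norm_nonneg q
  set A := ‖α‖ with hA
  have hA0 : 0 ≤ A := norm_nonneg α
  have htend : Filter.Tendsto (fun j : ℕ => A * r ^ j) Filter.atTop (nhds 0) := by
    simpa using (tendsto_pow_atTop_nhds_zero_of_lt_one h0 hq1).const_mul A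
  obtain ⟨N, hN⟩ := (Filter.eventually_atTop).1
    (htend.eventually_le_const (by norm_num : (0:ℝ) < 1/2))
  set ε : ℝ := (Real.exp (2 * A * (1 - r)⁻¹))⁻¹ with hε
  have hεpos : 0 < ε := inv_pos.2 (Real.exp_pos _)
  have hε1 : ε ≤ 1 := by
    rw [hε]
    have h1r : (0:ℝ) < 1 - r := by linarith
    have : (1:ℝ) ≤ Real.exp (2 * A * (1 - r)⁻¹) := by
      rw [Real.one_le_exp_iff]
      exact mul_nonneg (by positivity) (inv_nonneg.2 h1r.le)
    exact inv_le_one_of_one_le₀ this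
  have tail : ∀ k, ε ≤ ∏ j ∈ range k, ‖1 - α * q ^ (N + j)‖ := by
    intro k
    have step : ∀ j ∈ range k,
        (1 + 2 * (A * r ^ (N + j)))⁻¹ ≤ ‖1 - α * q ^ (N + j)‖ := by
      intro j _
      have hx : A * r ^ (N + j) ≤ 1/2 := hN (N + j) (Nat.le_add_right _ _)
      have hx0 : 0 ≤ A * r ^ (N + j) := by positivity
      have h1 : 1 - A * r ^ (N + j) ≤ ‖1 - α * q ^ (N + j)‖ := by
        have := abs_one_sub_ge (α * q ^ (N + j))
        simpa [norm_mul, norm_pow] using this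
      have h2 : (1 + 2 * (A * r ^ (N + j)))⁻¹ ≤ 1 - A * r ^ (N + j) := by
        rw [inv_le_iff_one_le_mul₀ (by positivity)]
        nlinarith
      linarith
    calc ε ≤ (∏ j ∈ range k, (1 + 2 * (A * r ^ (N + j)))) ⁻¹ := by
          rw [hε]
          refine inv_anti₀ (Finset.prod_pos fun j _ => by positivity) ?_
          calc ∏ j ∈ range k, (1 + 2 * (A * r ^ (N + j)))
              ≤ ∏ j ∈ range k, Real.exp (2 * (A * r ^ (N + j))) := by
                refine Finset.prod_le_prod (fun j _ => by positivity) (fun j _ => ?_)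
                have := Real.add_one_le_exp (2 * (A * r ^ (N + j)))
                linarith
            _ = Real.exp (∑ j ∈ range k, 2 * (A * r ^ (N + j))) := by rw [Real.exp_sum]
            _ ≤ Real.exp (2 * A * (1 - r)⁻¹) := by
                rw [Real.exp_le_exp]
                have hsum : ∑ j ∈ range k, r ^ (N + j) ≤ (1 - r)⁻¹ := by
                  calc ∑ j ∈ range k, r ^ (N + j) ≤ ∑ j ∈ range k, r ^ j := by
                        refine Finset.sum_le_sum fun j _ => ?_
                        exact pow_le_pow_of_le_one h0 hq1.le (Nat.le_add_left _ _)
                    _ ≤ (1 - r)⁻¹ := geom_partial_le h0 hq1 k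
                calc ∑ j ∈ range k, 2 * (A * r ^ (N + j))
                    = 2 * A * ∑ j ∈ range k, r ^ (N + j) := by
                      rw [mul_sum]
                      exact Finset.sum_congr rfl fun j _ => by ring
                  _ ≤ 2 * A * (1 - r)⁻¹ := by nlinarith
      _ ≤ ∏ j ∈ range k, ‖1 - α * q ^ (N + j)‖ := by
          rw [← Finset.prod_inv_distrib]
          exact Finset.prod_le_prod (fun j _ => by positivity) step
  set m : ℝ := (Finset.range (N + 1)).inf' (by simp) (fun i => ‖qPoch α q i‖)
    with hm
  have hmpos : 0 < m := by
    rw [hm, Finset.lt_inf'_iff]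
    intro i _
    have : qPoch α q i ≠ 0 := Finset.prod_ne_zero_iff.2 fun j _ => h j
    exact norm_pos_iff.2 this
  refine ⟨m * ε, by positivity, fun k => ?_⟩
  by_cases hk : k ≤ N
  · have h1 : m ≤ ‖qPoch α q k‖ :=
      Finset.inf'_le _ (by simp [Nat.lt_succ_iff.2 hk])
    nlinarith
  · push_neg at hk
    obtain ⟨e, rfl⟩ : ∃ e, k = N + e := ⟨k - N, by omega⟩
    have hsplit : qPoch α q (N + e) = qPoch α q N * ∏ j ∈ range e, (1 - α * q ^ (N + j)) := by
      rw [qPoch, qPoch, Finset.prod_range_add]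
    rw [hsplit, norm_mul, norm_prod]
    have h1 : m ≤ ‖qPoch α q N‖ := Finset.inf'_le _ (by simp)
    have h2 := tail e
    have h3 : (0:ℝ) ≤ ∏ j ∈ range e, ‖1 - α * q ^ (N + j)‖ :=
      Finset.prod_nonneg fun j _ => norm_nonneg _
    nlinarith

lemma summable_aux {q : ℂ} (hq1 : ‖q‖ < 1) (u v w1 w2 s : ℂ)
    (hs : ‖s‖ < 1)
    (hw1 : ∀ j : ℕ, (1:ℂ) - w1 * q ^ j ≠ 0) (hw2 : ∀ j : ℕ, (1:ℂ) - w2 * q ^ j ≠ 0) :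
    Summable fun k : ℕ =>
      ‖(qPoch u q k * qPoch v q k) / (qPoch w1 q k * qPoch w2 q k) * s ^ k‖ := by
  obtain ⟨δ1, hδ1, hl1⟩ := qPoch_abs_lower hq1 hw1
  obtain ⟨δ2, hδ2, hl2⟩ := qPoch_abs_lower hq1 hw2
  set Ku := Real.exp (‖u‖ * (1 - ‖q‖)⁻¹) with hKu
  set Kv := Real.exp (‖v‖ * (1 - ‖q‖)⁻¹) with hKv
  have hKup : 0 < Ku := Real.exp_pos _
  have hKvp : 0 < Kv := Real.exp_pos _
  refine Summable.of_nonneg_of_le (fun k => norm_nonneg _)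
    (fun k => ?_) (((summable_geometric_of_lt_one (norm_nonneg s) hs)).mul_left
      (Ku * Kv / (δ1 * δ2)))
  rw [norm_mul, norm_div, norm_mul, norm_mul, norm_pow]
  refine mul_le_mul_of_nonneg_right ?_ (pow_nonneg (norm_nonneg s) k)
  refine div_le_div₀ (by positivity) ?_ (by positivity) ?_
  · exact mul_le_mul (qPoch_abs_le hq1 u k) (qPoch_abs_le hq1 v k)
      (norm_nonneg _) hKup.le
  · exact mul_le_mul (hl1 k) (hl2 k) hδ2.le (norm_nonneg _)

lemma qPoch_split {q α : ℂ} (hq : q ≠ 0) (hα : α ≠ 0) {k m : ℕ} :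
    qPoch α q (m + k) = qPoch α q m *
      ((-α) ^ k * (∏ j ∈ range k, q ^ (m + j)) *
        qPoch (q ^ ((1 : ℤ) - ((m + k : ℕ) : ℤ)) / α) q k) := by
  rw [qPoch, qPoch, Finset.prod_range_add]
  congr 1
  have hrefl := Finset.prod_range_reflect
    (fun j => (1 : ℂ) - q ^ ((1 : ℤ) - ((m + k : ℕ) : ℤ)) / α * q ^ j) k
  have hconst : (-α) ^ k = ∏ _j ∈ range k, (-α) := by
    rw [Finset.prod_const, Finset.card_range]
  rw [qPoch, ← hrefl, hconst, ← Finset.prod_mul_distrib, ← Finset.prod_mul_distrib]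
  refine Finset.prod_congr rfl fun j hj => ?_
  have key : (q:ℂ) ^ (m + j) * (q ^ ((1 : ℤ) - ((m + k : ℕ) : ℤ)) * q ^ (k - 1 - j)) = 1 := by
    rw [← zpow_natCast q (m + j), ← zpow_natCast q (k - 1 - j), ← zpow_add₀ hq,
      ← zpow_add₀ hq, ← zpow_zero q]
    congr 1
    have hj' : j < k := Finset.mem_range.1 hj
    omega
  calc (1:ℂ) - α * q ^ (m + j)
      = -(α * q ^ (m + j)) + (q ^ (m + j) *
          (q ^ ((1 : ℤ) - ((m + k : ℕ) : ℤ)) * q ^ (k - 1 - j))) * (α * α⁻¹) := by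
        rw [mul_inv_cancel₀ hα, key]; ring
    _ = -α * q ^ (m + j) *
          ((1:ℂ) - q ^ ((1 : ℤ) - ((m + k : ℕ) : ℤ)) / α * q ^ (k - 1 - j)) := by
        ring

lemma qPoch_qinv_ne_zero {q : ℂ} (hq : q ≠ 0) (hq1 : ‖q‖ < 1) {k n : ℕ}
    (hkn : k ≤ n) : qPoch (q ^ ((1 : ℤ) - (n : ℤ)) / q) q k ≠ 0 := by
  refine Finset.prod_ne_zero_iff.2 fun j hj => ?_
  have hj' : j < k := Finset.mem_range.1 hj
  have key : q ^ ((1 : ℤ) - (n : ℤ)) / q * q ^ j = ((q : ℂ) ^ ((n - j : ℕ)))⁻¹ := by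
    rw [div_eq_mul_inv, ← zpow_natCast q j, ← zpow_natCast q (n - j), ← zpow_neg_one,
      ← zpow_neg, ← zpow_add₀ hq, ← zpow_add₀ hq]
    congr 1
    omega
  rw [key]
  intro hzero
  have h1 : (q : ℂ) ^ (n - j : ℕ) = 1 := by
    have hne : (q : ℂ) ^ (n - j : ℕ) ≠ 0 := pow_ne_zero _ hq
    field_simp at hzero
    linear_combination hzero
  have := congrArg (‖·‖) h1
  rw [norm_pow, norm_one] at this
  have hlt : ‖q‖ ^ (n - j : ℕ) < 1 :=
    pow_lt_one₀ (norm_nonneg q) hq1 (by omega)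
  linarith [this, hlt]

lemma qPoch_omega_ne_zero {q α : ℂ} (hq : q ≠ 0) (hα : α ≠ 0) (h : α ∉ Omega q) {k n : ℕ}
    (hkn : k ≤ n) : qPoch (q ^ ((1 : ℤ) - (n : ℤ)) / α) q k ≠ 0 := by
  refine Finset.prod_ne_zero_iff.2 fun j hj => ?_
  have hj' : j < k := Finset.mem_range.1 hj
  intro hzero
  have key : q ^ ((1 : ℤ) - (n : ℤ)) * q ^ j = ((q : ℂ) ^ ((n - 1 - j : ℕ)))⁻¹ := by
    rw [← zpow_natCast q j, ← zpow_natCast q (n - 1 - j), ← zpow_neg, ← zpow_add₀ hq]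
    congr 1
    omega
  have hαeq : α = q⁻¹ ^ (n - 1 - j) := by
    rw [inv_pow]
    have : q ^ ((1 : ℤ) - (n : ℤ)) / α * q ^ j = 1 := by linear_combination -hzero
    rw [div_mul_eq_mul_div, key, div_eq_one_iff_eq hα] at this
    exact this.symm
  exact h ⟨_, hαeq⟩


/-- Product generating function for the Askey--Wilson polynomials. -/
theorem askeyWilson_product_generating_function
    (q : ℂ) (hq0 : 0 < ‖q‖) (hq1 : ‖q‖ < 1)
    (a b c d z : ℂ) (ha : a ≠ 0) (hb : b ≠ 0) (hc : c ≠ 0) (hd : d ≠ 0) (hz : z ≠ 0)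
    (x : ℂ) (hx : x = (z + z⁻¹) / 2)
    (t : ℂ) (ht1 : ‖t * z‖ < 1) (ht2 : ‖t / z‖ < 1)
    (hab : a * b ∉ Omega q) (hcd : c * d ∉ Omega q)
    (hden1 : ∀ n k : ℕ, qPoch (q ^ ((1 : ℤ) - n) * z / c) q k ≠ 0)
    (hden2 : ∀ n k : ℕ, qPoch (q ^ ((1 : ℤ) - n) * z / d) q k ≠ 0) :
    (∑' k : ℕ, (qPoch (a * z) q k * qPoch (b * z) q k) /
        (qPoch q q k * qPoch (a * b) q k) * (t / z) ^ k) *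
      (∑' k : ℕ, (qPoch (c / z) q k * qPoch (d / z) q k) /
        (qPoch q q k * qPoch (c * d) q k) * (t * z) ^ k) =
      ∑' n : ℕ, askeyWilson q a b c d z n * t ^ n /
        (qPoch q q n * qPoch (a * b) q n * qPoch (c * d) q n) := by
  have hq : q ≠ 0 := by
    intro h; rw [h] at hq0; simp at hq0
  have hfq : ∀ j : ℕ, (1:ℂ) - q * q ^ j ≠ 0 := by
    intro j h
    have h1 : q * q ^ j = 1 := by linear_combination -h
    have h2 := congrArg (‖·‖) h1
    rw [norm_mul, norm_pow, norm_one] at h2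
    nlinarith [pow_le_one₀ (norm_nonneg q) hq1.le (n := j), norm_nonneg q,
      pow_nonneg (norm_nonneg q) j]
  have hfab : ∀ j : ℕ, (1:ℂ) - (a*b) * q ^ j ≠ 0 := by
    intro j h
    refine hab ⟨j, ?_⟩
    rw [inv_pow]
    exact eq_inv_of_mul_eq_one_left (by linear_combination -h)
  have hfcd : ∀ j : ℕ, (1:ℂ) - (c*d) * q ^ j ≠ 0 := by
    intro j h
    refine hcd ⟨j, ?_⟩
    rw [inv_pow]
    exact eq_inv_of_mul_eq_one_left (by linear_combination -h)
  have hPq : ∀ k, qPoch q q k ≠ 0 := fun k => Finset.prod_ne_zero_iff.2 fun j _ => hfq j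
  have hPab : ∀ k, qPoch (a*b) q k ≠ 0 := fun k => Finset.prod_ne_zero_iff.2 fun j _ => hfab j
  have hPcd : ∀ k, qPoch (c*d) q k ≠ 0 := fun k => Finset.prod_ne_zero_iff.2 fun j _ => hfcd j
  rw [tsum_mul_tsum_eq_tsum_sum_range_of_summable_norm
    (summable_aux hq1 (a*z) (b*z) q (a*b) (t/z) ht2 hfq hfab)
    (summable_aux hq1 (c/z) (d/z) q (c*d) (t*z) ht1 hfq hfcd)]
  refine tsum_congr fun n => ?_
  rw [askeyWilson, Finset.mul_sum, Finset.sum_mul, Finset.sum_div]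
  refine Finset.sum_congr rfl fun k hk => ?_
  have hkn : k ≤ n := Nat.lt_succ_iff.1 (Finset.mem_range.1 hk)
  obtain ⟨m, rfl⟩ : ∃ m, n = m + k := ⟨n - k, by omega⟩
  simp only [Nat.add_sub_cancel]
  -- conversions of arguments
  have e1 : (q:ℂ) ^ ((1:ℤ) - ((m + k : ℕ) : ℤ)) / q = q⁻¹ ^ (m + k) := by
    rw [inv_pow, ← zpow_natCast q (m + k), ← zpow_neg, div_eq_mul_inv, ← zpow_neg_one,
      ← zpow_add₀ hq]
    congr 1
    ring
  have e2 : (q:ℂ) ^ ((1:ℤ) - ((m + k : ℕ) : ℤ)) / (c / z) =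
      q ^ ((1:ℤ) - ((m + k : ℕ) : ℤ)) * z / c := div_div_eq_mul_div _ _ _
  have e3 : (q:ℂ) ^ ((1:ℤ) - ((m + k : ℕ) : ℤ)) / (d / z) =
      q ^ ((1:ℤ) - ((m + k : ℕ) : ℤ)) * z / d := div_div_eq_mul_div _ _ _
  rw [qPoch_split hq hq (k := k) (m := m),
    qPoch_split hq (mul_ne_zero hc hd) (k := k) (m := m),
    qPoch_split hq (div_ne_zero hc hz) (k := k) (m := m),
    qPoch_split hq (div_ne_zero hd hz) (k := k) (m := m),
    e1, e2, e3]
  -- nonvanishing facts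
  have hQq : qPoch (q⁻¹ ^ (m + k)) q k ≠ 0 := by
    rw [← e1]; exact qPoch_qinv_ne_zero hq hq1 (Nat.le_add_left k m)
  have hQcd : qPoch (q ^ ((1:ℤ) - ((m + k : ℕ) : ℤ)) / (c * d)) q k ≠ 0 :=
    qPoch_omega_ne_zero hq (mul_ne_zero hc hd) hcd (Nat.le_add_left k m)
  have hQc := hden1 (m + k) k
  have hQd := hden2 (m + k) k
  have hW : (∏ j ∈ range k, (q:ℂ) ^ (m + j)) ≠ 0 :=
    Finset.prod_ne_zero_iff.2 fun j _ => pow_ne_zero _ hq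
  have hQk := hPq k
  have hQm := hPq m
  have hABk := hPab k
  have hABn := hPab (m + k)
  have hCDm := hPcd m
  set Az := qPoch (a * z) q k with hsAz
  set Bz := qPoch (b * z) q k with hsBz
  set Qk := qPoch q q k with hsQk
  set ABk := qPoch (a * b) q k with hsABk
  set Cm := qPoch (c / z) q m with hsCm
  set Dm := qPoch (d / z) q m with hsDm
  set Qm := qPoch q q m with hsQm
  set CDm := qPoch (c * d) q m with hsCDm
  set ABn := qPoch (a * b) q (m + k) with hsABn
  set Qq := qPoch (q⁻¹ ^ (m + k)) q k with hsQq
  set Qcd := qPoch (q ^ ((1:ℤ) - ((m + k : ℕ) : ℤ)) / (c * d)) q k with hsQcd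
  set Qc := qPoch (q ^ ((1:ℤ) - ((m + k : ℕ) : ℤ)) * z / c) q k with hsQc
  set Qd := qPoch (q ^ ((1:ℤ) - ((m + k : ℕ) : ℤ)) * z / d) q k with hsQd
  set W := ∏ j ∈ range k, (q:ℂ) ^ (m + j) with hsW
  have hD1 : Qk * ABk * z ^ k * (Qm * CDm) ≠ 0 :=
    mul_ne_zero (mul_ne_zero (mul_ne_zero hQk hABk) (pow_ne_zero _ hz))
      (mul_ne_zero hQm hCDm)
  have hD2 : (z ^ k * z ^ k * (Qk * ABk * Qc * Qd)) *
      (Qm * ((-q) ^ k * W * Qq) * ABn * (CDm * ((-(c*d)) ^ k * W * Qcd))) ≠ 0 := by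
    refine mul_ne_zero (mul_ne_zero (mul_ne_zero (pow_ne_zero _ hz) (pow_ne_zero _ hz)) ?_) ?_
    · exact mul_ne_zero (mul_ne_zero (mul_ne_zero hQk hABk) hQc) hQd
    · refine mul_ne_zero (mul_ne_zero (mul_ne_zero hQm ?_) hABn) (mul_ne_zero hCDm ?_)
      · exact mul_ne_zero (mul_ne_zero (pow_ne_zero _ (neg_ne_zero.2 hq)) hW) hQq
      · exact mul_ne_zero (mul_ne_zero (pow_ne_zero _ (neg_ne_zero.2 (mul_ne_zero hc hd))) hW)
          hQcd
  trans ((Az * Bz * t ^ k * (Cm * Dm * (t * z) ^ m)) / (Qk * ABk * z ^ k * (Qm * CDm)))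
  · ring
  trans ((z ^ (m + k) * ABn * (Cm * ((-c) ^ k * W * Qc)) * (Dm * ((-d) ^ k * W * Qd)) *
        (Qq * Az * Bz * Qcd * q ^ k) * t ^ (m + k)) /
      ((z ^ k * z ^ k * (Qk * ABk * Qc * Qd)) *
        (Qm * ((-q) ^ k * W * Qq) * ABn * (CDm * ((-(c*d)) ^ k * W * Qcd)))))
  · rw [div_eq_div_iff hD1 hD2]
    ring
  · ring
end

section
/- (Infinite product generating function for continuous q-inverse Hermite polynomials.) Let q ∈ ℂ with 0 < |q| < 1, let z ∈ ℂ*, x = (z + z^{−1})/2, and t ∈ ℂ with |t| < 1. Then ∑_{n=0}^∞ t^n q^{n(n−1)/2} H_n(x|q^{−1}) / (q;q)_n = (−tz;q)_∞ (−t/z;q)_∞. -/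
set_option maxHeartbeats 1000000

open Finset

/-- The continuous q-inverse Hermite polynomials `H_n(x|q⁻¹)`, where
`x = (z + z⁻¹)/2`. -/
noncomputable def cqiHermite (q z : ℂ) (n : ℕ) : ℂ :=
  z ^ n * ∑ k ∈ Finset.range (n + 1),
    qPoch (q⁻¹ ^ n) q k / qPoch q q k *
      ((-1) ^ k * q ^ (k * (k - 1) / 2) * (q / z ^ 2) ^ k)


namespace CQI

def tri (m : ℕ) : ℕ := m * (m - 1) / 2

lemma tri_eq_sum (m : ℕ) : tri m = ∑ i ∈ range m, i := by
  have := Finset.sum_range_id_mul_two m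
  unfold tri; omega

lemma tri_add (a b : ℕ) : tri (a + b) = tri a + tri b + a * b := by
  simp only [tri_eq_sum, Finset.sum_range_add]
  have : ∑ i ∈ range b, (a + i) = a * b + ∑ i ∈ range b, i := by
    rw [Finset.sum_add_distrib, Finset.sum_const, smul_eq_mul, card_range]; ring
  omega

lemma two_tri_add (k : ℕ) : 2 * tri k + k = k * k := by
  cases k with
  | zero => simp [tri]
  | succ m =>
    have he : Even (m * (m + 1)) := Nat.even_mul_succ_self m
    obtain ⟨c, hc⟩ := he
    have h1 : (m+1) * ((m+1) - 1) = m * (m+1) := by simp [Nat.mul_comm]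
    have h2 : (m+1)*(m+1) = m*(m+1) + (m+1) := by ring
    unfold tri
    omega

end CQI

namespace CQI
variable {q : ℂ}

lemma factor_norm_le (hq1 : ‖q‖ < 1) (j : ℕ) : ‖q * q ^ j‖ ≤ ‖q‖ := by
  rw [norm_mul, norm_pow]
  calc ‖q‖ * ‖q‖ ^ j ≤ ‖q‖ * 1 := by
        apply mul_le_mul_of_nonneg_left _ (norm_nonneg q)
        exact pow_le_one₀ (norm_nonneg q) hq1.le
    _ = ‖q‖ := mul_one _

lemma qPoch_q_ne_zero (hq1 : ‖q‖ < 1) (m : ℕ) : qPoch q q m ≠ 0 := by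
  apply Finset.prod_ne_zero_iff.2
  intro j _
  intro h
  have h1 : (1 : ℂ) = q * q ^ j := by linear_combination h
  have h2 := factor_norm_le hq1 j
  rw [← h1, norm_one] at h2
  linarith

lemma qPoch_norm_ge (hq1 : ‖q‖ < 1) (m : ℕ) : (1 - ‖q‖) ^ m ≤ ‖qPoch q q m‖ := by
  unfold qPoch
  rw [norm_prod]
  calc (1 - ‖q‖) ^ m = ∏ _j ∈ range m, (1 - ‖q‖) := by rw [Finset.prod_const, card_range]
    _ ≤ ∏ j ∈ range m, ‖1 - q * q ^ j‖ := by
        apply Finset.prod_le_prod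
        · intro j _; linarith
        · intro j _
          calc 1 - ‖q‖ ≤ 1 - ‖q * q ^ j‖ := by linarith [factor_norm_le hq1 j]
            _ ≤ ‖(1 : ℂ)‖ - ‖q * q ^ j‖ := by norm_num
            _ ≤ ‖1 - q * q ^ j‖ := norm_sub_norm_le _ _

end CQI

namespace CQI
variable {q : ℂ}

noncomputable def gfun (q a : ℂ) (k : ℕ) : ℂ := q ^ tri k * a ^ k / qPoch q q k

lemma tri_succ (n : ℕ) : tri (n + 1) = tri n + n := by
  have := tri_add n 1
  simp [tri] at this ⊢
  omega

lemma summable_master {s : ℝ} (hs : 0 < s) (hs1 : s < 1) (r : ℝ) (hr : 0 ≤ r) :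
    Summable (fun k => s ^ tri k * r ^ k) := by
  set r' := max r 1 with hr'def
  have hr' : 0 < r' := lt_of_lt_of_le one_pos (le_max_right _ _)
  have h1 : Summable (fun k => s ^ tri k * r' ^ k) := by
    apply summable_of_ratio_test_tendsto_lt_one (l := 0) one_pos
    · filter_upwards with n
      positivity
    · have heq : (fun n => ‖s ^ tri (n + 1) * r' ^ (n + 1)‖ / ‖s ^ tri n * r' ^ n‖)
          = fun n => s ^ n * r' := by
        funext n
        rw [Real.norm_of_nonneg (by positivity), Real.norm_of_nonneg (by positivity),
          tri_succ, pow_add, pow_succ]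
        field_simp
      rw [heq]
      have := (tendsto_pow_atTop_nhds_zero_of_lt_one hs.le hs1).mul_const r'
      simpa using this
  apply h1.of_nonneg_of_le (fun k => by positivity)
  intro k
  exact mul_le_mul_of_nonneg_left (pow_le_pow_left₀ hr (le_max_left _ _) k) (by positivity)

lemma summable_norm_gfun (hq0 : q ≠ 0) (hq1 : ‖q‖ < 1) (a : ℂ) :
    Summable (fun k => ‖gfun q a k‖) := by
  have hs : 0 < ‖q‖ := norm_pos_iff.2 hq0
  have hd : 0 < 1 - ‖q‖ := by linarith
  apply Summable.of_nonneg_of_le (fun k => norm_nonneg _) _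
    (summable_master hs hq1 (‖a‖ / (1 - ‖q‖)) (by positivity))
  intro k
  unfold gfun
  rw [norm_div, norm_mul, norm_pow, norm_pow, div_pow, mul_div_assoc]
  apply mul_le_mul_of_nonneg_left _ (by positivity)
  apply div_le_div_of_nonneg_left (by positivity) (by positivity) (qPoch_norm_ge hq1 k)

end CQI

namespace CQI
variable {q : ℂ}

lemma gfun_zero (a : ℂ) : gfun q a 0 = 1 := by simp [gfun, tri, qPoch]

lemma qPoch_q_succ (m : ℕ) : qPoch q q (m + 1) = qPoch q q m * (1 - q ^ (m + 1)) := by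
  unfold qPoch
  rw [Finset.prod_range_succ, ← pow_succ']

lemma gfun_step (hq0 : q ≠ 0) (hq1 : ‖q‖ < 1) (a : ℂ) :
    ∑' k, gfun q a k = (1 + a) * ∑' k, gfun q (q * a) k := by
  classical
  set h : ℕ → ℂ := fun k => Nat.casesOn k 0 (fun m => a * gfun q (q * a) m) with hh
  have hfac : ∀ m : ℕ, (1 - q ^ (m + 1)) ≠ 0 := by
    intro m
    have := qPoch_q_ne_zero hq1 (m + 1)
    rw [qPoch_q_succ] at this
    exact right_ne_zero_of_mul this
  have hterm : ∀ k, gfun q a k = gfun q (q * a) k + h k := by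
    intro k
    cases k with
    | zero => simp [hh, gfun_zero]
    | succ m =>
      simp only [hh]
      unfold gfun
      rw [tri_succ, qPoch_q_succ]
      have hP0 := qPoch_q_ne_zero hq1 m
      have hf0 := hfac m
      field_simp
      ring
  have hsum2 : Summable (gfun q (q * a)) := (summable_norm_gfun hq0 hq1 _).of_norm
  have hsumh : Summable h := by
    rw [← summable_nat_add_iff 1]
    simpa [hh] using hsum2.mul_left a
  calc ∑' k, gfun q a k = ∑' k, (gfun q (q * a) k + h k) := tsum_congr hterm
    _ = ∑' k, gfun q (q * a) k + ∑' k, h k := Summable.tsum_add hsum2 hsumh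
    _ = ∑' k, gfun q (q * a) k + (h 0 + ∑' k, h (k + 1)) := by rw [Summable.tsum_eq_zero_add hsumh]
    _ = (1 + a) * ∑' k, gfun q (q * a) k := by
        simp only [hh]
        rw [tsum_mul_left]
        show _ + ((0:ℂ) + _) = _
        ring

lemma gfun_iter (hq0 : q ≠ 0) (hq1 : ‖q‖ < 1) (a : ℂ) (n : ℕ) :
    ∑' k, gfun q a k = (∏ j ∈ range n, (1 + a * q ^ j)) * ∑' k, gfun q (q ^ n * a) k := by
  induction n with
  | zero => simp
  | succ m ih =>
    rw [ih, prod_range_succ, gfun_step hq0 hq1 (q ^ m * a)]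
    have h1 : q * (q ^ m * a) = q ^ (m + 1) * a := by ring
    rw [h1]
    ring

end CQI

namespace CQI
variable {q : ℂ}
open Filter Topology

lemma gfun_tendsto_one (hq0 : q ≠ 0) (hq1 : ‖q‖ < 1) (a : ℂ) :
    Tendsto (fun n => ∑' k, gfun q (q ^ n * a) k) atTop (𝓝 1) := by
  have hs : 0 < ‖q‖ := norm_pos_iff.2 hq0
  have hd : 0 < 1 - ‖q‖ := by linarith
  set u : ℕ → ℝ := fun k => ‖q‖ ^ tri k * (‖q‖ * ‖a‖ / (1 - ‖q‖)) ^ k * (1 / (1 - ‖q‖)) with hu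
  have hU : Summable u := (summable_master hs hq1 _ (by positivity)).mul_right _
  have hbound : ∀ n k, ‖gfun q (q ^ n * a) (k + 1)‖ ≤ ‖q‖ ^ n * ‖a‖ * u k := by
    intro n k
    unfold gfun
    rw [norm_div, norm_mul, norm_pow, norm_pow, norm_mul, norm_pow]
    have step1 : ‖q‖ ^ tri (k + 1) * (‖q‖ ^ n * ‖a‖) ^ (k + 1) / ‖qPoch q q (k + 1)‖
        ≤ ‖q‖ ^ tri (k + 1) * (‖q‖ ^ n * ‖a‖) ^ (k + 1) / (1 - ‖q‖) ^ (k + 1) :=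
      div_le_div_of_nonneg_left (by positivity) (by positivity) (qPoch_norm_ge hq1 (k + 1))
    refine step1.trans ?_
    have e : ‖q‖ ^ tri (k + 1) * (‖q‖ ^ n * ‖a‖) ^ (k + 1) / (1 - ‖q‖) ^ (k + 1)
        = (‖q‖ ^ n * ‖a‖ * u k) * (‖q‖ ^ n) ^ k := by
      rw [tri_succ, hu]
      have hc : (1 - ‖q‖)⁻¹ ^ k * (1 - ‖q‖) ^ k = 1 := by
        rw [← mul_pow, inv_mul_cancel₀ hd.ne', one_pow]
      field_simp
      linear_combination (-(‖q‖ ^ tri k * ‖q‖ ^ k * ‖q‖ ^ (k * n) * ‖q‖ ^ n * ‖a‖ * ‖a‖ ^ k *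
        (1 - ‖q‖))) * hc
    rw [e]
    calc (‖q‖ ^ n * ‖a‖ * u k) * (‖q‖ ^ n) ^ k ≤ (‖q‖ ^ n * ‖a‖ * u k) * 1 := by
          apply mul_le_mul_of_nonneg_left _ (by positivity)
          exact pow_le_one₀ (by positivity) (pow_le_one₀ hs.le hq1.le)
      _ = ‖q‖ ^ n * ‖a‖ * u k := mul_one _
  have key : ∀ n, ‖(∑' k, gfun q (q ^ n * a) k) - 1‖ ≤ ‖q‖ ^ n * (‖a‖ * ∑' k, u k) := by
    intro n
    have hsum : Summable (gfun q (q ^ n * a)) := (summable_norm_gfun hq0 hq1 _).of_norm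
    have hsumn : Summable (fun k => ‖gfun q (q ^ n * a) (k + 1)‖) :=
      (summable_nat_add_iff 1).2 (summable_norm_gfun hq0 hq1 _)
    rw [Summable.tsum_eq_zero_add hsum, gfun_zero, add_sub_cancel_left]
    calc ‖∑' k, gfun q (q ^ n * a) (k + 1)‖ ≤ ∑' k, ‖gfun q (q ^ n * a) (k + 1)‖ :=
          norm_tsum_le_tsum_norm hsumn
      _ ≤ ∑' k, ‖q‖ ^ n * ‖a‖ * u k := Summable.tsum_le_tsum (hbound n) hsumn (hU.mul_left _)
      _ = ‖q‖ ^ n * (‖a‖ * ∑' k, u k) := by rw [tsum_mul_left]; ring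
  have h0 : Tendsto (fun n : ℕ => ‖q‖ ^ n * (‖a‖ * ∑' k, u k)) atTop (𝓝 0) := by
    simpa using (tendsto_pow_atTop_nhds_zero_of_lt_one hs.le hq1).mul_const (‖a‖ * ∑' k, u k)
  have h1 := squeeze_zero_norm key h0
  have h2 := h1.add_const 1
  simpa using h2

end CQI

namespace CQI
variable {q : ℂ}
open Filter Topology

lemma multipliable_one_add (hq1 : ‖q‖ < 1) (a : ℂ) :
    Multipliable (fun j : ℕ => 1 + a * q ^ j) := by
  by_cases h0 : ∀ j : ℕ, 1 + a * q ^ j ≠ 0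
  · apply Complex.multipliable_of_summable_log
    have hten : Tendsto (fun j : ℕ => ‖a‖ * ‖q‖ ^ j) atTop (𝓝 (‖a‖ * 0)) :=
      (tendsto_pow_atTop_nhds_zero_of_lt_one (norm_nonneg q) hq1).const_mul ‖a‖
    rw [mul_zero] at hten
    have hev : ∀ᶠ j in atTop, ‖a * q ^ j‖ ≤ 1 / 2 := by
      filter_upwards [hten.eventually_lt_const (by norm_num : (0:ℝ) < 1/2)] with j hj
      rw [norm_mul, norm_pow]
      exact hj.le
    apply Summable.of_norm_bounded_eventually_nat (g := fun j => 3 / 2 * (‖a‖ * ‖q‖ ^ j))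
    · exact ((summable_geometric_of_lt_one (norm_nonneg q) hq1).mul_left ‖a‖).mul_left (3/2)
    · filter_upwards [hev] with j hj
      calc ‖Complex.log (1 + a * q ^ j)‖ ≤ 3 / 2 * ‖a * q ^ j‖ :=
            Complex.norm_log_one_add_half_le_self hj
        _ = 3 / 2 * (‖a‖ * ‖q‖ ^ j) := by rw [norm_mul, norm_pow]
  · push_neg at h0
    obtain ⟨j0, hj0⟩ := h0
    refine ⟨0, ?_⟩
    have hev : ∀ᶠ s : Finset ℕ in atTop, ({j0} : Finset ℕ) ≤ s := Filter.eventually_ge_atTop _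
    apply Tendsto.congr' ?_ (tendsto_const_nhds (x := (0:ℂ)))
    filter_upwards [hev] with s hs
    exact (Finset.prod_eq_zero (hs (Finset.mem_singleton_self j0)) hj0).symm

lemma euler (hq0 : q ≠ 0) (hq1 : ‖q‖ < 1) (a : ℂ) :
    ∑' k, gfun q a k = qPochInf (-a) q := by
  have hm := multipliable_one_add hq1 a
  have h1 := hm.hasProd.tendsto_prod_nat
  have h3 := h1.mul (gfun_tendsto_one hq0 hq1 a)
  rw [mul_one] at h3
  have h4 : (fun n => (∏ j ∈ range n, (1 + a * q ^ j)) * ∑' k, gfun q (q ^ n * a) k)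
      = fun _ => ∑' k, gfun q a k := by
    funext n
    exact (gfun_iter hq0 hq1 a n).symm
  rw [h4] at h3
  have h5 := tendsto_nhds_unique h3 tendsto_const_nhds
  rw [← h5, qPochInf]
  congr 1
  funext j
  ring

end CQI

namespace CQI
variable {q : ℂ}

lemma prod_split' {k n : ℕ} (hk : k ≤ n) :
    (∏ j ∈ range k, (1 - q ^ (n - j))) * qPoch q q (n - k) = qPoch q q n := by
  have h1 : ∏ j ∈ range k, (1 - q * q ^ ((n - k) + j)) = ∏ j ∈ range k, (1 - q ^ (n - j)) := by
    rw [← Finset.prod_range_reflect]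
    apply Finset.prod_congr rfl
    intro j hj
    rw [mem_range] at hj
    have e1 : (n - k) + (k - 1 - j) = n - 1 - j := by omega
    rw [e1, ← pow_succ']
    have e2 : n - 1 - j + 1 = n - j := by omega
    rw [e2]
  have h2 : n = (n - k) + k := by omega
  unfold qPoch
  rw [h2, Finset.prod_range_add, ← h2, h1]
  ring

lemma key_poch (hq0 : q ≠ 0) {k n : ℕ} (hk : k ≤ n) :
    qPoch (q⁻¹ ^ n) q k * q ^ (n * k) =
      (-1) ^ k * q ^ tri k * ∏ j ∈ range k, (1 - q ^ (n - j)) := by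
  unfold qPoch
  have h1 : q ^ (n * k) = ∏ _j ∈ range k, q ^ n := by
    rw [Finset.prod_const, card_range, ← pow_mul]
  have h2 : (-1 : ℂ) ^ k * q ^ tri k = ∏ j ∈ range k, (-(q ^ j)) := by
    have : ∀ j : ℕ, -(q ^ j) = (-1) * q ^ j := fun j => by ring
    rw [Finset.prod_congr rfl (fun j _ => this j), Finset.prod_mul_distrib, Finset.prod_const,
      card_range, Finset.prod_pow_eq_pow_sum, ← tri_eq_sum]
  rw [h1, ← Finset.prod_mul_distrib, h2, ← Finset.prod_mul_distrib]
  apply Finset.prod_congr rfl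
  intro j hj
  rw [mem_range] at hj
  have hqq : q⁻¹ ^ n * q ^ n = 1 := by
    rw [← mul_pow, inv_mul_cancel₀ hq0, one_pow]
  have hpow : q ^ j * q ^ (n - j) = q ^ n := by
    rw [← pow_add]
    congr 1
    omega
  linear_combination (-(q : ℂ) ^ j) * hqq - hpow

end CQI

namespace CQI
variable {q z : ℂ}

lemma exp_eq {k n : ℕ} (hk : k ≤ n) :
    tri n + (tri k + tri k + k) = (tri (n - k) + tri k) + n * k := by
  obtain ⟨m, rfl⟩ : ∃ m, n = m + k := ⟨n - k, by omega⟩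
  rw [Nat.add_sub_cancel, tri_add, add_mul]
  have h3 := two_tri_add k
  linarith [h3]

lemma crux (hq0 : q ≠ 0) (hq1 : ‖q‖ < 1) (hz : z ≠ 0) (t : ℂ) {k n : ℕ} (hk : k ≤ n) :
    t ^ n * q ^ tri n * z ^ n *
        (qPoch (q⁻¹ ^ n) q k / qPoch q q k * ((-1) ^ k * q ^ tri k * (q / z ^ 2) ^ k)) /
        qPoch q q n
      = gfun q (t * z) (n - k) * gfun q (t / z) k := by
  have hPk := qPoch_q_ne_zero hq1 k
  have hPn := qPoch_q_ne_zero hq1 n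
  have hPnk := qPoch_q_ne_zero hq1 (n - k)
  have hqnk : (q : ℂ) ^ (n * k) ≠ 0 := pow_ne_zero _ hq0
  have hpoch : qPoch (q⁻¹ ^ n) q k =
      (-1) ^ k * q ^ tri k * (qPoch q q n / qPoch q q (n - k)) / q ^ (n * k) := by
    rw [eq_div_iff hqnk, key_poch hq0 hk]
    congr 1
    rw [eq_div_iff hPnk]
    exact prod_split' hk
  rw [hpoch]
  unfold gfun
  field_simp
  have htz : t ^ n = t ^ (n - k) * t ^ k := by rw [← pow_add]; congr 1; omega
  have hzz : z ^ n = z ^ (n - k) * z ^ k := by rw [← pow_add]; congr 1; omega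
  have hneg : ((-1 : ℂ) ^ k) ^ 2 = 1 := by rw [← pow_mul, mul_comm, pow_mul]; norm_num
  have hq4 : q ^ tri n * q ^ tri k * q ^ k = q ^ (n * k) * q ^ tri (n - k) := by
    rw [← pow_add, ← pow_add, ← pow_add]
    congr 1
    linarith [exp_eq hk]
  rw [hneg, htz, hzz, ← hq4]
  field_simp
  have hzi : z ^ k * z⁻¹ ^ (k * 2) = z⁻¹ ^ k := by
    rw [mul_two, pow_add, ← mul_assoc, ← mul_pow, mul_inv_cancel₀ hz, one_pow, one_mul]
  linear_combination (t ^ (n - k) * t ^ k * z ^ (n - k) * q ^ k) * hzi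

end CQI


/-- Infinite product generating function for the continuous q-inverse Hermite
polynomials. -/
theorem cqiHermite_product_generating_function
    (q : ℂ) (hq0 : 0 < ‖q‖) (hq1 : ‖q‖ < 1)
    (z : ℂ) (hz : z ≠ 0) (x : ℂ) (hx : x = (z + z⁻¹) / 2)
    (t : ℂ) (ht : ‖t‖ < 1) :
    ∑' n : ℕ, t ^ n * q ^ (n * (n - 1) / 2) * cqiHermite q z n / qPoch q q n =
      qPochInf (-(t * z)) q * qPochInf (-(t / z)) q := by

  open CQI in
  have hq0' : q ≠ 0 := by
    intro h
    rw [h] at hq0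
    simp at hq0
  have hq1' : ‖q‖ < 1 := by exact hq1
  have hA := CQI.summable_norm_gfun hq0' hq1' (t * z)
  have hB := CQI.summable_norm_gfun hq0' hq1' (t / z)
  rw [← CQI.euler hq0' hq1' (t * z), ← CQI.euler hq0' hq1' (t / z),
    tsum_mul_tsum_eq_tsum_sum_antidiagonal_of_summable_norm hA hB]
  apply tsum_congr
  intro n
  rw [Finset.Nat.sum_antidiagonal_eq_sum_range_succ_mk]
  have hrefl : ∑ k ∈ range (n + 1), CQI.gfun q (t * z) k * CQI.gfun q (t / z) (n - k)
      = ∑ k ∈ range (n + 1), CQI.gfun q (t * z) (n - k) * CQI.gfun q (t / z) (n - (n - k)) := by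
    exact (Finset.sum_range_reflect
      (fun k => CQI.gfun q (t * z) k * CQI.gfun q (t / z) (n - k)) (n + 1)).symm
  rw [hrefl]
  simp only [cqiHermite, Finset.mul_sum, Finset.sum_div]
  apply Finset.sum_congr rfl
  intro k hk
  rw [Finset.mem_range] at hk
  have hkn : k ≤ n := by omega
  have hnn : n - (n - k) = k := by omega
  rw [hnn, ← CQI.crux hq0' hq1' hz t hkn]
  simp only [CQI.tri]
  ring
end
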